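/- arXiv:0906.1773 — 6 statements merged into one kernel-verified Lean document; each statement's English description precedes it below -/
import Mathlib

section
/- For α > 0, β, γ ≥ 0 with β, γ > 0, let A(r,s,t) be the 2×2 matrix with rows (r, s) and (t, r). Then there exists a norm on ℝ² such that the induced operator norm satisfies max over (r,s,t) ∈ [0,α]×[0,β]×[0,γ] of ‖A(r,s,t)‖ = α + √(βγ). -/
/-!
Use the weighted ℓ¹ norm `N x = √γ |x₀| + √β |x₁|`. For any weighted ℓ¹ norm, a matrix whose
weighted column sums `∑ᵢ wᵢ |Aᵢⱼ|` are at most `c wⱼ` has operator norm at most `c`, and the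
weights `√γ, √β` are chosen so that both weighted column sums of `A(α,β,γ)` equal
`(α + √(βγ)) wⱼ`. Since the entries enter monotonically, the same bound holds on the whole box,
and it is attained by `A(α,β,γ)` at the first basis vector.
-/

open Finset Matrix Real

section WeightedL1

variable {ι κ : Type*} [Fintype ι] [Fintype κ]

def weightedL1 (w x : ι → ℝ) : ℝ := ∑ i, w i * |x i|

variable {w : ι → ℝ}

lemma weightedL1_nonneg (hw : ∀ i, 0 ≤ w i) (x : ι → ℝ) : 0 ≤ weightedL1 w x :=
  sum_nonneg fun i _ => mul_nonneg (hw i) (abs_nonneg _)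

lemma weightedL1_eq_zero_iff (hw : ∀ i, 0 < w i) (x : ι → ℝ) : weightedL1 w x = 0 ↔ x = 0 := by
  rw [weightedL1, sum_eq_zero_iff_of_nonneg fun i _ => mul_nonneg (hw i).le (abs_nonneg _)]
  simp [(hw _).ne', funext_iff]

lemma weightedL1_smul (a : ℝ) (x : ι → ℝ) : weightedL1 w (a • x) = |a| * weightedL1 w x := by
  simp only [weightedL1, mul_sum, Pi.smul_apply, smul_eq_mul, abs_mul]
  exact sum_congr rfl fun i _ => by ring

lemma weightedL1_add_le (hw : ∀ i, 0 ≤ w i) (x y : ι → ℝ) :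
    weightedL1 w (x + y) ≤ weightedL1 w x + weightedL1 w y := by
  simp only [weightedL1, ← sum_add_distrib, ← mul_add, Pi.add_apply]
  exact sum_le_sum fun i _ => mul_le_mul_of_nonneg_left (abs_add_le _ _) (hw i)

lemma weightedL1_mulVec_le {v : ι → ℝ} {w : κ → ℝ} (hv : ∀ i, 0 ≤ v i) {A : Matrix ι κ ℝ} {c : ℝ}
    (hA : ∀ j, ∑ i, v i * |A i j| ≤ c * w j) (x : κ → ℝ) :
    weightedL1 v (A *ᵥ x) ≤ c * weightedL1 w x := calc
  weightedL1 v (A *ᵥ x) ≤ ∑ i, v i * ∑ j, |A i j| * |x j| := by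
      refine sum_le_sum fun i _ => mul_le_mul_of_nonneg_left ?_ (hv i)
      simpa only [Matrix.mulVec, dotProduct, abs_mul] using
        abs_sum_le_sum_abs (fun j => A i j * x j) univ
  _ = ∑ j, (∑ i, v i * |A i j|) * |x j| := by
      simp only [mul_sum, sum_mul]; rw [sum_comm]; simp only [mul_assoc]
  _ ≤ ∑ j, c * w j * |x j| :=
      sum_le_sum fun j _ => mul_le_mul_of_nonneg_right (hA j) (abs_nonneg _)
  _ = c * weightedL1 w x := by simp only [weightedL1, mul_sum, mul_assoc]

lemma weightedL1_mulVec_single [DecidableEq κ] (v : ι → ℝ) (A : Matrix ι κ ℝ) (j : κ) :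
    weightedL1 v (A *ᵥ Pi.single j 1) = ∑ i, v i * |A i j| := by
  simp [weightedL1]

lemma weightedL1_single [DecidableEq ι] (j : ι) : weightedL1 w (Pi.single j 1) = w j := by
  simp [weightedL1, Pi.single_apply, apply_ite]

end WeightedL1

lemma sqrt_mul_eq_sqrt_mul_sqrt_mul {β γ : ℝ} (hγ : 0 ≤ γ) : √β * γ = √γ * √(β * γ) := by
  rw [sqrt_mul' β hγ]; linear_combination (-√β) * mul_self_sqrt hγ

lemma weighted_column_sum_le {α β γ r s t : ℝ} (hβ : 0 ≤ β) (hγ : 0 ≤ γ) (hr : r ∈ Set.Icc 0 α)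
    (hs : s ∈ Set.Icc 0 β) (ht : t ∈ Set.Icc 0 γ) (j : Fin 2) :
    ∑ i, ![√γ, √β] i * |!![r, s; t, r] i j| ≤ (α + √(β * γ)) * ![√γ, √β] j := by
  have hβγ := sqrt_mul_eq_sqrt_mul_sqrt_mul (β := β) hγ
  have hγβ := sqrt_mul_eq_sqrt_mul_sqrt_mul (β := γ) hβ
  rw [mul_comm γ β] at hγβ
  fin_cases j <;>
    simp [Fin.sum_univ_two, abs_of_nonneg hr.1, abs_of_nonneg hs.1, abs_of_nonneg ht.1]
  · nlinarith [mul_le_mul_of_nonneg_left hr.2 (sqrt_nonneg γ),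
      mul_le_mul_of_nonneg_left ht.2 (sqrt_nonneg β)]
  · nlinarith [mul_le_mul_of_nonneg_left hs.2 (sqrt_nonneg γ),
      mul_le_mul_of_nonneg_left hr.2 (sqrt_nonneg β)]

/-- For α > 0, β, γ > 0, there exists a norm on ℝ² such that the
maximum over (r,s,t) ∈ [0,α]×[0,β]×[0,γ] of the induced operator norm of
A(r,s,t) = [[r,s],[t,r]] equals α + √(βγ): the operator norm is bounded by
α + √(βγ) for all parameters, and this bound is attained. -/
theorem uniform_norm_lemma (α β γ : ℝ) (hα : 0 < α) (hβ : 0 < β) (hγ : 0 < γ) :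
    ∃ N : (Fin 2 → ℝ) → ℝ,
      (∀ x, 0 ≤ N x) ∧
      (∀ x, N x = 0 ↔ x = 0) ∧
      (∀ (a : ℝ) (x), N (a • x) = |a| * N x) ∧
      (∀ x y, N (x + y) ≤ N x + N y) ∧
      (∀ r ∈ Set.Icc (0:ℝ) α, ∀ s ∈ Set.Icc (0:ℝ) β, ∀ t ∈ Set.Icc (0:ℝ) γ,
        ∀ x : Fin 2 → ℝ,
          N ((!![r, s; t, r]).mulVec x) ≤ (α + Real.sqrt (β * γ)) * N x) ∧
      (∃ r ∈ Set.Icc (0:ℝ) α, ∃ s ∈ Set.Icc (0:ℝ) β, ∃ t ∈ Set.Icc (0:ℝ) γ,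
        ∃ x : Fin 2 → ℝ, N x ≠ 0 ∧
          N ((!![r, s; t, r]).mulVec x) = (α + Real.sqrt (β * γ)) * N x) := by
  have hw : ∀ i, 0 < ![√γ, √β] i := by
    intro i; fin_cases i <;> simp [hβ, hγ]
  refine ⟨weightedL1 ![√γ, √β], weightedL1_nonneg (fun i => (hw i).le),
    weightedL1_eq_zero_iff hw, weightedL1_smul, weightedL1_add_le (fun i => (hw i).le),
    fun r hr s hs t ht => weightedL1_mulVec_le (fun i => (hw i).le)
      (weighted_column_sum_le hβ.le hγ.le hr hs ht), ?_⟩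
  refine ⟨α, ⟨hα.le, le_rfl⟩, β, ⟨hβ.le, le_rfl⟩, γ, ⟨hγ.le, le_rfl⟩, Pi.single 0 1, ?_, ?_⟩
  · rw [weightedL1_single]; exact (hw 0).ne'
  · rw [weightedL1_mulVec_single, weightedL1_single]
    simp [Fin.sum_univ_two, abs_of_pos hα, abs_of_pos hγ, sqrt_mul_eq_sqrt_mul_sqrt_mul hγ.le]
    ring
end

section
/- For α > 0, β, γ ≥ 0 (possibly with βγ = 0), and any ε > 0, there exists a norm on ℝ² such that for all (r,s,t) ∈ [0,α]×[0,β]×[0,γ], the operator norm of the matrix [[r,s],[t,r]] is at most α + √(βγ) + ε. -/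
/-! The weighted sup norm `max |x₀| (c |x₁|)` turns `[[r,s],[t,r]]` into a matrix whose
off-diagonal entries become `s / c` and `t c`; the row-sum bound then gives operator norm at most
`|r| + max (|s| / c) (|t| c)`. Since `βγ < (√(βγ) + ε)²`, the weight `c` can be chosen with
`β / c` and `γ c` both at most `√(βγ) + ε`. -/

open Matrix

def weightedMaxNorm (c : ℝ) (x : Fin 2 → ℝ) : ℝ :=
  max |x 0| (c * |x 1|)

variable {c : ℝ}

lemma weightedMaxNorm_nonneg (x : Fin 2 → ℝ) : 0 ≤ weightedMaxNorm c x :=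
  (abs_nonneg _).trans (le_max_left _ _)

lemma abs_le_weightedMaxNorm (x : Fin 2 → ℝ) : |x 0| ≤ weightedMaxNorm c x :=
  le_max_left _ _

lemma mul_abs_le_weightedMaxNorm (x : Fin 2 → ℝ) : c * |x 1| ≤ weightedMaxNorm c x :=
  le_max_right _ _

lemma weightedMaxNorm_eq_zero_iff (hc : 0 < c) (x : Fin 2 → ℝ) :
    weightedMaxNorm c x = 0 ↔ x = 0 := by
  refine ⟨fun h => ?_, fun h => by simp [h, weightedMaxNorm]⟩
  have h0 : |x 0| = 0 :=
    le_antisymm (h ▸ abs_le_weightedMaxNorm x) (abs_nonneg _)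
  have h1 : c * |x 1| = 0 :=
    le_antisymm (h ▸ mul_abs_le_weightedMaxNorm x) (by positivity)
  have h1' : |x 1| = 0 := (mul_eq_zero.mp h1).resolve_left hc.ne'
  ext i
  fin_cases i
  · exact abs_eq_zero.mp h0
  · exact abs_eq_zero.mp h1'

lemma weightedMaxNorm_smul (a : ℝ) (x : Fin 2 → ℝ) :
    weightedMaxNorm c (a • x) = |a| * weightedMaxNorm c x := by
  simp only [weightedMaxNorm, Pi.smul_apply, smul_eq_mul, abs_mul,
    mul_max_of_nonneg _ _ (abs_nonneg a)]
  ring_nf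

lemma weightedMaxNorm_add_le (hc : 0 ≤ c) (x y : Fin 2 → ℝ) :
    weightedMaxNorm c (x + y) ≤ weightedMaxNorm c x + weightedMaxNorm c y := by
  refine max_le ?_ ?_
  · calc |x 0 + y 0| ≤ |x 0| + |y 0| := abs_add_le _ _
      _ ≤ _ := add_le_add (abs_le_weightedMaxNorm x) (abs_le_weightedMaxNorm y)
  · calc c * |x 1 + y 1| ≤ c * |x 1| + c * |y 1| := by
          rw [← mul_add]; exact mul_le_mul_of_nonneg_left (abs_add_le _ _) hc
      _ ≤ _ := add_le_add (mul_abs_le_weightedMaxNorm x) (mul_abs_le_weightedMaxNorm y)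

lemma weightedMaxNorm_mulVec_le (hc : 0 ≤ c) {K r s t : ℝ} (hs : |s| ≤ K * c) (ht : c * |t| ≤ K)
    (x : Fin 2 → ℝ) :
    weightedMaxNorm c (!![r, s; t, r] *ᵥ x) ≤ (|r| + K) * weightedMaxNorm c x := by
  have hK : 0 ≤ K := (by positivity : 0 ≤ c * |t|).trans ht
  have hx0 := abs_le_weightedMaxNorm (c := c) x
  have hx1 := mul_abs_le_weightedMaxNorm (c := c) x
  have hmulVec : !![r, s; t, r] *ᵥ x = ![r * x 0 + s * x 1, t * x 0 + r * x 1] := by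
    ext i; fin_cases i <;> simp [mulVec, dotProduct, Fin.sum_univ_two]
  rw [hmulVec]
  refine max_le ?_ ?_
  · calc |r * x 0 + s * x 1| ≤ |r| * |x 0| + |s| * |x 1| := by
          simpa only [abs_mul] using abs_add_le (r * x 0) (s * x 1)
      _ ≤ |r| * weightedMaxNorm c x + K * (c * |x 1|) := by
          rw [← mul_assoc]; gcongr
      _ ≤ |r| * weightedMaxNorm c x + K * weightedMaxNorm c x := by gcongr
      _ = (|r| + K) * weightedMaxNorm c x := by ring
  · calc c * |t * x 0 + r * x 1| ≤ (c * |t|) * |x 0| + |r| * (c * |x 1|) := by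
          have := mul_le_mul_of_nonneg_left (abs_add_le (t * x 0) (r * x 1)) hc
          simp only [abs_mul] at this; linarith
      _ ≤ K * weightedMaxNorm c x + |r| * weightedMaxNorm c x := by gcongr
      _ = (|r| + K) * weightedMaxNorm c x := by ring

/-- The weight is `(β + δ) / K` with `δ = (K² - βγ) / (γ + 1)`, so that `γ δ ≤ K² - βγ`. -/
lemma exists_pos_le_mul_and_mul_le {β γ K : ℝ} (hβ : 0 ≤ β) (hγ : 0 ≤ γ) (hK : 0 < K)
    (hβγ : β * γ < K ^ 2) :
    ∃ c > 0, β ≤ K * c ∧ γ * c ≤ K := by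
  set δ := (K ^ 2 - β * γ) / (γ + 1)
  have hδ : 0 < δ := div_pos (by linarith) (by linarith)
  have hγδ : γ * δ ≤ K ^ 2 - β * γ := by
    rw [mul_div_assoc', div_le_iff₀ (by linarith)]
    nlinarith
  refine ⟨(β + δ) / K, ?_, ?_, ?_⟩
  · positivity
  · rw [mul_div_cancel₀ _ hK.ne']; linarith
  · rw [mul_div_assoc', div_le_iff₀ hK]; nlinarith

theorem uniform_norm_lemma_eps_general (α β γ ε : ℝ) (hβ : 0 ≤ β) (hγ : 0 ≤ γ)
    (hε : 0 < ε) :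
    ∃ N : (Fin 2 → ℝ) → ℝ,
      (∀ x, 0 ≤ N x) ∧
      (∀ x, N x = 0 ↔ x = 0) ∧
      (∀ (a : ℝ) (x), N (a • x) = |a| * N x) ∧
      (∀ x y, N (x + y) ≤ N x + N y) ∧
      (∀ r ∈ Set.Icc (0:ℝ) α, ∀ s ∈ Set.Icc (0:ℝ) β, ∀ t ∈ Set.Icc (0:ℝ) γ,
        ∀ x : Fin 2 → ℝ,
          N ((!![r, s; t, r]).mulVec x) ≤ (α + Real.sqrt (β * γ) + ε) * N x) := by
  set K := Real.sqrt (β * γ) + ε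
  have hK : 0 < K := by positivity
  have hβγ : β * γ < K ^ 2 := by
    have := Real.sq_sqrt (mul_nonneg hβ hγ)
    nlinarith [Real.sqrt_nonneg (β * γ)]
  obtain ⟨c, hc, hβc, hγc⟩ := exists_pos_le_mul_and_mul_le hβ hγ hK hβγ
  refine ⟨weightedMaxNorm c, weightedMaxNorm_nonneg, weightedMaxNorm_eq_zero_iff hc,
    weightedMaxNorm_smul, weightedMaxNorm_add_le hc.le, ?_⟩
  rintro r ⟨hr0, hrα⟩ s ⟨hs0, hsβ⟩ t ⟨ht0, htγ⟩ x
  have hs : |s| ≤ K * c := by rw [abs_of_nonneg hs0]; linarith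
  have ht : c * |t| ≤ K := by rw [abs_of_nonneg ht0]; nlinarith
  calc weightedMaxNorm c (!![r, s; t, r] *ᵥ x) ≤ (|r| + K) * weightedMaxNorm c x :=
        weightedMaxNorm_mulVec_le hc.le hs ht x
    _ ≤ (α + Real.sqrt (β * γ) + ε) * weightedMaxNorm c x := by
        rw [abs_of_nonneg hr0, add_assoc]
        gcongr
        exact weightedMaxNorm_nonneg x

/-- For α > 0, β, γ ≥ 0 (possibly βγ = 0) and ε > 0, there is a
norm on ℝ² for which the operator norm of A(r,s,t) = [[r,s],[t,r]] is at most
α + √(βγ) + ε for all (r,s,t) ∈ [0,α]×[0,β]×[0,γ]. -/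
theorem uniform_norm_lemma_eps (α β γ ε : ℝ) (hα : 0 < α) (hβ : 0 ≤ β) (hγ : 0 ≤ γ)
    (hε : 0 < ε) :
    ∃ N : (Fin 2 → ℝ) → ℝ,
      (∀ x, 0 ≤ N x) ∧
      (∀ x, N x = 0 ↔ x = 0) ∧
      (∀ (a : ℝ) (x), N (a • x) = |a| * N x) ∧
      (∀ x y, N (x + y) ≤ N x + N y) ∧
      (∀ r ∈ Set.Icc (0:ℝ) α, ∀ s ∈ Set.Icc (0:ℝ) β, ∀ t ∈ Set.Icc (0:ℝ) γ,
        ∀ x : Fin 2 → ℝ,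
          N ((!![r, s; t, r]).mulVec x) ≤ (α + Real.sqrt (β * γ) + ε) * N x) :=
  uniform_norm_lemma_eps_general α β γ ε hβ hγ hε
end

section
/- Fix t ∈ [0, T_c) and a C² function g₀ : [0,1]² → ℝ with nonnegative mixed second partial derivatives, and suppose ∂g₀/∂x, ∂g₀/∂y map [0,1]² into [0,1], and set α = sup ∂²g₀/∂x∂y, β = sup ∂²g₀/∂y², γ = sup ∂²g₀/∂x², with t(α + √(βγ))/(1+t) < 1. Then for every (u,v) ∈ [0,1]², the map F_t(x,y) = (u/(1+t) + (t/(1+t))∂g₀/∂y(x,y), v/(1+t) + (t/(1+t))∂g₀/∂x(x,y)) has a unique fixed point in [0,1]². -/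
open Set
open scoped NNReal

/-!
Both coordinates of `F_t` are `c = t/(1+t)` times a first partial of `g₀`, so by the mean value
inequality the increments of `F_t` are bounded entrywise by the nonnegative matrix
`c [[α, β], [γ, α]]` applied to the increments of the argument. Its spectral radius is
`c (α + √(βγ)) < 1`, hence it has norm `< 1` for a weighted sup norm `max |x| (L |y|)`, and `F_t`
is a contraction of `[0,1]²` for that metric; Banach's fixed point theorem concludes.
-/

theorem fderiv_fderiv_apply_comm {E F : Type*} [NormedAddCommGroup E] [NormedSpace ℝ E]
    [NormedAddCommGroup F] [NormedSpace ℝ F] {f : E → F} (hf : ContDiff ℝ 2 f) (x v w : E) :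
    fderiv ℝ (fun y => fderiv ℝ f y v) x w = fderiv ℝ (fun y => fderiv ℝ f y w) x v := by
  have hdf : Differentiable ℝ (fderiv ℝ f) :=
    (hf.fderiv_right (by norm_num)).differentiable one_ne_zero
  rw [fderiv_clm_apply (hdf x) (differentiableAt_const v),
    fderiv_clm_apply (hdf x) (differentiableAt_const w)]
  simpa using (hf.contDiffAt.isSymmSndFDerivAt (by simp)).eq w v

theorem abs_sub_le_of_abs_fderiv_apply_le {h : ℝ × ℝ → ℝ} {s : Set (ℝ × ℝ)} (hs : Convex ℝ s)
    (hh : Differentiable ℝ h) {A B : ℝ} (hA : ∀ z ∈ s, |fderiv ℝ h z (1, 0)| ≤ A)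
    (hB : ∀ z ∈ s, |fderiv ℝ h z (0, 1)| ≤ B) {p q : ℝ × ℝ} (hp : p ∈ s) (hq : q ∈ s) :
    |h p - h q| ≤ A * |p.1 - q.1| + B * |p.2 - q.2| := by
  have hsplit : ∀ z, fderiv ℝ h z (p - q) =
      (p.1 - q.1) * fderiv ℝ h z (1, 0) + (p.2 - q.2) * fderiv ℝ h z (0, 1) := by
    intro z
    rw [show p - q = (p.1 - q.1) • ((1 : ℝ), (0 : ℝ)) + (p.2 - q.2) • ((0 : ℝ), (1 : ℝ)) by
      ext <;> simp, map_add, map_smul, map_smul, smul_eq_mul, smul_eq_mul]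
  have hderiv : ∀ τ : ℝ, HasDerivAt (fun τ => h (q + τ • (p - q)))
      (fderiv ℝ h (q + τ • (p - q)) (p - q)) τ := by
    intro τ
    have hline : HasDerivAt (fun τ : ℝ => q + τ • (p - q)) (p - q) τ := by
      simpa using ((hasDerivAt_id τ).smul_const (p - q)).const_add q
    exact (hh _).hasFDerivAt.comp_hasDerivAt τ hline
  have := norm_image_sub_le_of_norm_deriv_le_segment_01'
    (fun τ _ => (hderiv τ).hasDerivWithinAt) fun τ hτ => by
      have hz := hs.add_smul_sub_mem hq hp (Ico_subset_Icc_self hτ)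
      rw [hsplit, Real.norm_eq_abs]
      calc _ ≤ |p.1 - q.1| * |fderiv ℝ h _ (1, 0)| + |p.2 - q.2| * |fderiv ℝ h _ (0, 1)| :=
            (abs_add_le _ _).trans_eq (by rw [abs_mul, abs_mul])
        _ ≤ A * |p.1 - q.1| + B * |p.2 - q.2| := by
            nlinarith [hA _ hz, hB _ hz, abs_nonneg (p.1 - q.1), abs_nonneg (p.2 - q.2)]
  simpa [Real.norm_eq_abs] using this

theorem ContDiff.abs_fderiv_apply_sub_le {f : ℝ × ℝ → ℝ} (hf : ContDiff ℝ 2 f)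
    {s : Set (ℝ × ℝ)} (hs : Convex ℝ s) (w : ℝ × ℝ) {A B : ℝ}
    (hA : ∀ z ∈ s, |fderiv ℝ (fun y => fderiv ℝ f y (1, 0)) z w| ≤ A)
    (hB : ∀ z ∈ s, |fderiv ℝ (fun y => fderiv ℝ f y (0, 1)) z w| ≤ B) {p q : ℝ × ℝ}
    (hp : p ∈ s) (hq : q ∈ s) :
    |fderiv ℝ f p w - fderiv ℝ f q w| ≤ A * |p.1 - q.1| + B * |p.2 - q.2| :=
  abs_sub_le_of_abs_fderiv_apply_le hs
    (((hf.fderiv_right (by norm_num)).clm_apply contDiff_const).differentiable one_ne_zero)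
    (fun z hz => fderiv_fderiv_apply_comm hf z (1, 0) w ▸ hA z hz)
    (fun z hz => fderiv_fderiv_apply_comm hf z (0, 1) w ▸ hB z hz) hp hq

theorem Homeomorph.existsUnique_fixedPoint_of_dist_le {α β : Type*} [TopologicalSpace α]
    [MetricSpace β] [CompleteSpace β] (e : α ≃ₜ β) {f : α → α} {s : Set α} (hs : IsClosed s)
    (hne : s.Nonempty) (hf : MapsTo f s s) {K : ℝ≥0} (hK : K < 1)
    (hd : ∀ x ∈ s, ∀ y ∈ s, dist (e (f x)) (e (f y)) ≤ K * dist (e x) (e y)) :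
    ∃! x, x ∈ s ∧ f x = x := by
  set t := e.symm ⁻¹' s
  set g := e ∘ f ∘ e.symm
  have hg : MapsTo g t t := fun y hy => by simpa [t, g] using hf hy
  have : CompleteSpace t := (hs.preimage e.symm.continuous).completeSpace_coe
  have : Nonempty t := ⟨⟨e hne.some, by simpa [t] using hne.some_mem⟩⟩
  have hcon : ContractingWith K (hg.restrict g t t) :=
    ⟨hK, LipschitzWith.of_dist_le_mul fun y z => by
      simpa [Subtype.dist_eq, g] using hd _ y.2 _ z.2⟩
  set y := ContractingWith.fixedPoint _ hcon
  have hy : e (f (e.symm y)) = y := congrArg Subtype.val hcon.fixedPoint_isFixedPt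
  refine ⟨e.symm y, ⟨y.2, by simpa using congrArg e.symm hy⟩, ?_⟩
  rintro x ⟨hx, hfx⟩
  have : (⟨e x, by simpa [t] using hx⟩ : t) = y :=
    hcon.fixedPoint_unique (Subtype.ext (by simp [g, hfx]))
  simp [← this]

theorem max_le_max_mul_max_of_le {a b g L x y x' y' : ℝ} (ha : 0 ≤ a) (hb : 0 ≤ b) (hg : 0 ≤ g)
    (hL : 0 < L) (hx : 0 ≤ x) (hx' : x' ≤ a * x + b * y)
    (hy' : y' ≤ g * x + a * y) :
    max x' (L * y') ≤ max (a + b / L) (a + L * g) * max x (L * y) := by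
  set m := max x (L * y)
  have hxm : x ≤ m := le_max_left _ _
  have hym : L * y ≤ m := le_max_right _ _
  have hm : 0 ≤ m := hx.trans hxm
  refine max_le ?_ ?_
  · calc x' ≤ a * x + b / L * (L * y) := by
          rwa [div_mul_eq_mul_div, mul_left_comm, mul_div_cancel_left₀ _ hL.ne']
      _ ≤ (a + b / L) * m := by nlinarith [div_nonneg hb hL.le]
      _ ≤ _ := mul_le_mul_of_nonneg_right (le_max_left _ _) hm
  · calc L * y' ≤ L * g * x + a * (L * y) := by nlinarith
      _ ≤ (a + L * g) * m := by nlinarith [mul_nonneg hL.le hg]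
      _ ≤ _ := mul_le_mul_of_nonneg_right (le_max_right _ _) hm

theorem exists_max_add_div_add_mul_lt_one {a b g : ℝ} (hb : 0 ≤ b) (hg : 0 ≤ g)
    (h : a + √(b * g) < 1) : ∃ L > 0, max (a + b / L) (a + L * g) < 1 := by
  -- `L = (b + ε) / √((b + ε) (g + ε))` makes both entries at most `a + √((b + ε) (g + ε))`.
  have hcont : ContinuousAt (fun ε : ℝ => a + √((b + ε) * (g + ε))) 0 := by fun_prop
  obtain ⟨ε, hε, hεpos : 0 < ε⟩ := ((hcont.eventually (gt_mem_nhds (by simpa using h))).filter_mono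
    nhdsWithin_le_nhds |>.and (self_mem_nhdsWithin (s := Ioi 0))).exists
  set r := √((b + ε) * (g + ε))
  have hr : 0 < r := Real.sqrt_pos.2 (by positivity)
  have hr2 : r * r = (b + ε) * (g + ε) := Real.mul_self_sqrt (by positivity)
  refine ⟨(b + ε) / r, by positivity, max_lt ?_ ?_⟩
  · calc a + b / ((b + ε) / r) ≤ a + r := by
          rw [div_div_eq_mul_div, add_le_add_iff_left, div_le_iff₀ (by positivity)]
          nlinarith
      _ < 1 := hε
  · calc a + (b + ε) / r * g ≤ a + r := by
          rw [add_le_add_iff_left, div_mul_eq_mul_div, div_le_iff₀ hr]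
          nlinarith
      _ < 1 := hε

theorem div_add_div_mul_mem_Icc {t u d : ℝ} (ht : 0 ≤ t) (hu : u ∈ Icc (0 : ℝ) 1)
    (hd : d ∈ Icc (0 : ℝ) 1) : u / (1 + t) + t / (1 + t) * d ∈ Icc (0 : ℝ) 1 := by
  have := convex_Icc (0 : ℝ) 1 hu hd (a := 1 / (1 + t)) (b := t / (1 + t)) (by positivity)
    (by positivity) (by field_simp)
  simpa [smul_eq_mul, div_mul_eq_mul_div, inv_mul_eq_div] using this

theorem existsUnique_fixedPoint_of_abs_sub_le {F : ℝ × ℝ → ℝ × ℝ} {s : Set (ℝ × ℝ)}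
    (hs : IsClosed s) (hne : s.Nonempty) (hF : MapsTo F s s) {a b g : ℝ} (ha : 0 ≤ a)
    (hb : 0 ≤ b) (hg : 0 ≤ g) (hab : a + √(b * g) < 1)
    (h₁ : ∀ p ∈ s, ∀ q ∈ s, |(F p).1 - (F q).1| ≤ a * |p.1 - q.1| + b * |p.2 - q.2|)
    (h₂ : ∀ p ∈ s, ∀ q ∈ s, |(F p).2 - (F q).2| ≤ g * |p.1 - q.1| + a * |p.2 - q.2|) :
    ∃! z, z ∈ s ∧ F z = z := by
  obtain ⟨L, hL, hκ⟩ := exists_max_add_div_add_mul_lt_one hb hg hab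
  have hκ0 : 0 ≤ max (a + b / L) (a + L * g) := le_max_of_le_left (by positivity)
  let e : ℝ × ℝ ≃ₜ ℝ × ℝ := (Homeomorph.refl ℝ).prodCongr (Homeomorph.mulLeft₀ L hL.ne')
  have hdist (p q : ℝ × ℝ) : dist (e p) (e q) = max |p.1 - q.1| (L * |p.2 - q.2|) := by
    simp [e, Prod.dist_eq, Real.dist_eq, ← mul_sub, abs_mul, abs_of_pos hL]
  refine e.existsUnique_fixedPoint_of_dist_le hs hne hF (K := ⟨_, hκ0⟩) hκ fun p hp q hq => ?_
  rw [hdist, hdist]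
  exact max_le_max_mul_max_of_le ha hb hg hL (abs_nonneg _) (h₁ p hp q hq) (h₂ p hp q hq)

/-- for t < T_c (i.e. t(α+√(βγ))/(1+t) < 1), and g₀ C² with first
partials mapping [0,1]² into [0,1] and nonnegative second partials bounded by
α (mixed), β (in y²), γ (in x²), the map
F_t(x,y) = (u/(1+t) + t/(1+t)·∂g₀/∂y, v/(1+t) + t/(1+t)·∂g₀/∂x)
has a unique fixed point in [0,1]², for every (u,v) ∈ [0,1]². -/
theorem unique_fixed_point (g₀ : ℝ × ℝ → ℝ) (hg : ContDiff ℝ 2 g₀)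
    (t α β γ : ℝ) (ht : 0 ≤ t)
    (hx01 : ∀ p ∈ Set.Icc ((0:ℝ), (0:ℝ)) (1, 1), fderiv ℝ g₀ p (1, 0) ∈ Set.Icc (0:ℝ) 1)
    (hy01 : ∀ p ∈ Set.Icc ((0:ℝ), (0:ℝ)) (1, 1), fderiv ℝ g₀ p (0, 1) ∈ Set.Icc (0:ℝ) 1)
    (hα : ∀ p ∈ Set.Icc ((0:ℝ), (0:ℝ)) (1, 1),
      fderiv ℝ (fun q => fderiv ℝ g₀ q (1, 0)) p (0, 1) ∈ Set.Icc (0:ℝ) α)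
    (hβ : ∀ p ∈ Set.Icc ((0:ℝ), (0:ℝ)) (1, 1),
      fderiv ℝ (fun q => fderiv ℝ g₀ q (0, 1)) p (0, 1) ∈ Set.Icc (0:ℝ) β)
    (hγ : ∀ p ∈ Set.Icc ((0:ℝ), (0:ℝ)) (1, 1),
      fderiv ℝ (fun q => fderiv ℝ g₀ q (1, 0)) p (1, 0) ∈ Set.Icc (0:ℝ) γ)
    (hcrit : t * (α + Real.sqrt (β * γ)) / (1 + t) < 1) :
    ∀ u ∈ Set.Icc (0:ℝ) 1, ∀ v ∈ Set.Icc (0:ℝ) 1,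
      ∃! z : ℝ × ℝ, z ∈ Set.Icc ((0:ℝ), (0:ℝ)) (1, 1) ∧
        z = (u / (1 + t) + t / (1 + t) * fderiv ℝ g₀ z (0, 1),
             v / (1 + t) + t / (1 + t) * fderiv ℝ g₀ z (1, 0)) := by
  intro u hu v hv
  set K := Icc ((0:ℝ), (0:ℝ)) (1, 1)
  set c := t / (1 + t)
  have hc : 0 ≤ c := by positivity
  have h00 : ((0:ℝ), (0:ℝ)) ∈ K := left_mem_Icc.2 (by norm_num)
  have abs_le_of_mem {x r : ℝ} (h : x ∈ Icc 0 r) : |x| ≤ r := (abs_of_nonneg h.1).trans_le h.2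
  refine (existsUnique_congr fun z => and_congr_right' eq_comm).1
    (existsUnique_fixedPoint_of_abs_sub_le isClosed_Icc ⟨_, h00⟩ (fun p hp => ?_)
      (mul_nonneg hc ((hα _ h00).1.trans (hα _ h00).2))
      (mul_nonneg hc ((hβ _ h00).1.trans (hβ _ h00).2))
      (mul_nonneg hc ((hγ _ h00).1.trans (hγ _ h00).2)) ?_
      (fun p hp q hq => ?_) (fun p hp q hq => ?_))
  · rw [show K = _ from (Icc_prod_Icc _ _ _ _).symm]
    exact ⟨div_add_div_mul_mem_Icc ht hu (hy01 p hp), div_add_div_mul_mem_Icc ht hv (hx01 p hp)⟩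
  · rwa [mul_mul_mul_comm, Real.sqrt_mul (mul_self_nonneg c), Real.sqrt_mul_self hc,
      ← mul_add, ← mul_div_right_comm]
  · simp only [add_sub_add_left_eq_sub, ← mul_sub, abs_mul, abs_of_nonneg hc, mul_assoc,
      ← mul_add]
    exact mul_le_mul_of_nonneg_left (hg.abs_fderiv_apply_sub_le (convex_Icc _ _) _
      (fun z hz => abs_le_of_mem (hα z hz)) (fun z hz => abs_le_of_mem (hβ z hz)) hp hq) hc
  · simp only [add_sub_add_left_eq_sub, ← mul_sub, abs_mul, abs_of_nonneg hc, mul_assoc,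
      ← mul_add]
    exact mul_le_mul_of_nonneg_left (hg.abs_fderiv_apply_sub_le (convex_Icc _ _) _
      (fun z hz => abs_le_of_mem (hγ z hz))
      (fun z hz => fderiv_fderiv_apply_comm hg z _ _ ▸ abs_le_of_mem (hα z hz)) hp hq) hc
end

section
/- Let g : [0,T)×(0,1)² → ℝ be a regular solution of the PDE ∂g_t/∂t = (∂g_t/∂x)(∂g_t/∂y) − (1/(1+t))(x ∂g_t/∂x + y ∂g_t/∂y), and suppose along a characteristic (x(t),y(t)) one has ∂g_t/∂x(x(t),y(t)) = p₁(0)/(1+t) and ∂g_t/∂y(x(t),y(t)) = p₂(0)/(1+t), with x'(t) = x(t)/(1+t) − p₂(0)/(1+t) and y'(t) = y(t)/(1+t) − p₁(0)/(1+t). Then g_t(x(t),y(t)) = g₀(x(0),y(0)) − (t/(1+t))·p₁(0)p₂(0). -/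
/-! Along the characteristic, the chain rule and the PDE give
`d/dt g_t(x(t), y(t)) = -p₁p₂/(1+t)²`, which is also the derivative of `-t/(1+t) · p₁p₂`;
the two sides agree at `t = 0`, hence on all of `[0, T)`. -/

open Set

section

variable {E F : Type*} [NormedAddCommGroup E] [NormedSpace ℝ E]
  [NormedAddCommGroup F] [NormedSpace ℝ F]

theorem eqOn_Ico_of_hasDerivAt_eq {f g f' : ℝ → F} {a b : ℝ}
    (hf : ∀ s ∈ Ico a b, HasDerivAt f (f' s) s) (hg : ∀ s ∈ Ico a b, HasDerivAt g (f' s) s)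
    (ha : f a = g a) : EqOn f g (Ico a b) := by
  intro t ht
  have hIcc : Icc a t ⊆ Ico a b := Icc_subset_Ico_right ht.2
  have hIco : Ico a t ⊆ Ico a b := Ico_subset_Ico_right ht.2.le
  exact eq_of_has_deriv_right_eq
    (fun s hs => (hf s (hIco hs)).hasDerivWithinAt) (fun s hs => (hg s (hIco hs)).hasDerivWithinAt)
    (fun s hs => (hf s (hIcc hs)).continuousAt.continuousWithinAt)
    (fun s hs => (hg s (hIcc hs)).continuousAt.continuousWithinAt) ha t ⟨ht.1, le_rfl⟩

theorem HasDerivAt.comp_of_differentiableAt_uncurry {g : ℝ → E → F} {c : ℝ → E} {t : ℝ}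
    {a : F} {c' : E} (hg : DifferentiableAt ℝ (Function.uncurry g) (t, c t))
    (hgt : HasDerivAt (fun s => g s (c t)) a t) (hc : HasDerivAt c c' t) :
    HasDerivAt (fun s => g s (c s)) (a + fderiv ℝ (g t) (c t) c') t := by
  set L := fderiv ℝ (Function.uncurry g) (t, c t)
  have hL : HasFDerivAt (Function.uncurry g) L (t, c t) := hg.hasFDerivAt
  have h_time : L (1, 0) = a := by
    have h := hL.comp_hasDerivAt t ((hasDerivAt_id t).prodMk (hasDerivAt_const t (c t)))
    exact h.unique hgt
  have h_space : fderiv ℝ (g t) (c t) = L.comp (ContinuousLinearMap.inr ℝ ℝ E) :=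
    (hL.comp (c t) ((hasFDerivAt_const t (c t)).prodMk (hasFDerivAt_id (c t)))).fderiv
  have h_total : L (1, c') = L (1, 0) + L (0, c') := by
    rw [← map_add, Prod.mk_add_mk, add_zero, zero_add]
  rw [h_space, ← h_time, ContinuousLinearMap.comp_apply, ContinuousLinearMap.inr_apply, ← h_total]
  exact hL.comp_hasDerivAt t ((hasDerivAt_id t).prodMk hc)

theorem ContinuousLinearMap.apply_prod_real (L : ℝ × ℝ →L[ℝ] F) (a b : ℝ) :
    L (a, b) = a • L (1, 0) + b • L (0, 1) := by
  rw [← map_smul, ← map_smul, ← map_add]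
  congr 1
  ext <;> simp

end

theorem hasDerivAt_div_one_add {s : ℝ} (hs : 1 + s ≠ 0) :
    HasDerivAt (fun u => u / (1 + u)) (1 / (1 + s) ^ 2) s := by
  have h := (hasDerivAt_id' s).div ((hasDerivAt_id' s).const_add 1) hs
  rwa [one_mul, mul_one, add_sub_cancel_right] at h

theorem along_characteristics_general (T : ℝ) (g : ℝ → ℝ × ℝ → ℝ) (gt : ℝ → ℝ × ℝ → ℝ)
    (x y : ℝ → ℝ) (p₁ p₂ : ℝ)
    (hreg : ContDiff ℝ 1 (fun q : ℝ × ℝ × ℝ => g q.1 q.2))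
    (hgt : ∀ t ∈ Set.Ico (0:ℝ) T, ∀ q : ℝ × ℝ, HasDerivAt (fun s => g s q) (gt t q) t)
    (hPDE : ∀ t ∈ Set.Ico (0:ℝ) T, ∀ q : ℝ × ℝ,
      gt t q = fderiv ℝ (g t) q (1, 0) * fderiv ℝ (g t) q (0, 1)
        - (1 / (1 + t)) * (q.1 * fderiv ℝ (g t) q (1, 0) + q.2 * fderiv ℝ (g t) q (0, 1)))
    (hx : ∀ t ∈ Set.Ico (0:ℝ) T, HasDerivAt x (x t / (1 + t) - p₂ / (1 + t)) t)
    (hy : ∀ t ∈ Set.Ico (0:ℝ) T, HasDerivAt y (y t / (1 + t) - p₁ / (1 + t)) t)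
    (hchar1 : ∀ t ∈ Set.Ico (0:ℝ) T, fderiv ℝ (g t) (x t, y t) (1, 0) = p₁ / (1 + t))
    (hchar2 : ∀ t ∈ Set.Ico (0:ℝ) T, fderiv ℝ (g t) (x t, y t) (0, 1) = p₂ / (1 + t)) :
    ∀ t ∈ Set.Ico (0:ℝ) T,
      g t (x t, y t) = g 0 (x 0, y 0) - (t / (1 + t)) * (p₁ * p₂) := by
  have h_one_add : ∀ s ∈ Ico (0:ℝ) T, 1 + s ≠ 0 := fun s hs => by linarith [hs.1]
  have h_along : ∀ s ∈ Ico (0:ℝ) T,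
      HasDerivAt (fun s => g s (x s, y s)) (-(p₁ * p₂) / (1 + s) ^ 2) s := by
    intro s hs
    have h := HasDerivAt.comp_of_differentiableAt_uncurry (c := fun s => (x s, y s))
      (hreg.differentiable one_ne_zero _) (hgt s hs _) ((hx s hs).prodMk (hy s hs))
    beta_reduce at h
    rw [ContinuousLinearMap.apply_prod_real, hPDE s hs, hchar1 s hs, hchar2 s hs] at h
    refine h.congr_deriv ?_
    simp only [smul_eq_mul]
    field_simp [h_one_add s hs]
    ring
  have h_closed_form : ∀ s ∈ Ico (0:ℝ) T,
      HasDerivAt (fun s => g 0 (x 0, y 0) - s / (1 + s) * (p₁ * p₂))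
        (-(p₁ * p₂) / (1 + s) ^ 2) s := by
    intro s hs
    refine (((hasDerivAt_div_one_add (h_one_add s hs)).mul_const (p₁ * p₂)).const_sub
      (g 0 (x 0, y 0))).congr_deriv ?_
    ring
  exact eqOn_Ico_of_hasDerivAt_eq h_along h_closed_form (by simp)

/-- along a characteristic of the PDE
∂g/∂t = (∂g/∂x)(∂g/∂y) − (1/(1+t))(x ∂g/∂x + y ∂g/∂y),
on which ∂g/∂x = p₁/(1+t), ∂g/∂y = p₂/(1+t), x' = x/(1+t) − p₂/(1+t),
y' = y/(1+t) − p₁/(1+t), the solution satisfies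
g_t(x(t),y(t)) = g₀(x(0),y(0)) − (t/(1+t))·p₁p₂. -/
theorem along_characteristics (T : ℝ) (g : ℝ → ℝ × ℝ → ℝ) (gt : ℝ → ℝ × ℝ → ℝ)
    (x y : ℝ → ℝ) (p₁ p₂ : ℝ)
    (hreg : ContDiff ℝ 1 (fun q : ℝ × ℝ × ℝ => g q.1 q.2))
    (hreg2 : ∀ t ∈ Set.Ico (0:ℝ) T, ContDiff ℝ 2 (g t))
    (hgt : ∀ t ∈ Set.Ico (0:ℝ) T, ∀ q : ℝ × ℝ, HasDerivAt (fun s => g s q) (gt t q) t)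
    (hPDE : ∀ t ∈ Set.Ico (0:ℝ) T, ∀ q : ℝ × ℝ,
      gt t q = fderiv ℝ (g t) q (1, 0) * fderiv ℝ (g t) q (0, 1)
        - (1 / (1 + t)) * (q.1 * fderiv ℝ (g t) q (1, 0) + q.2 * fderiv ℝ (g t) q (0, 1)))
    (hx : ∀ t ∈ Set.Ico (0:ℝ) T, HasDerivAt x (x t / (1 + t) - p₂ / (1 + t)) t)
    (hy : ∀ t ∈ Set.Ico (0:ℝ) T, HasDerivAt y (y t / (1 + t) - p₁ / (1 + t)) t)
    (hchar1 : ∀ t ∈ Set.Ico (0:ℝ) T, fderiv ℝ (g t) (x t, y t) (1, 0) = p₁ / (1 + t))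
    (hchar2 : ∀ t ∈ Set.Ico (0:ℝ) T, fderiv ℝ (g t) (x t, y t) (0, 1) = p₂ / (1 + t)) :
    ∀ t ∈ Set.Ico (0:ℝ) T,
      g t (x t, y t) = g 0 (x 0, y 0) - (t / (1 + t)) * (p₁ * p₂) :=
  along_characteristics_general T g gt x y p₁ p₂ hreg hgt hPDE hx hy hchar1 hchar2
end

section
/- Let α, β, γ ≥ 0 and for t ≥ 0 with (1+t−tα)² ≠ t²βγ, suppose (a,c) ∈ ℝ² solves the linear system [[1+t−tα, −tγ],[−tβ, 1+t−tα]]·(a,c)ᵀ = (1/(1+t))·(γ, α)ᵀ. Then a = γ/((1+t−tα)² − t²γβ). Moreover if M = α + √(βγ) > 1 and T_c = 1/(M−1), then a → +∞ as t → T_c provided γ > 0. -/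
/-!
Cramer's rule gives `a`, once one notices that the numerator
`(1 + t - tα) γ + tγ α` collapses to `γ (1 + t)`. With `s = √(βγ)` and `M = α + s`, the determinant
factors as `(1 - t (M - 1)) (1 + t - tα + ts)`: both factors are positive on `[0, T_c)` and the
first vanishes at `T_c`, so the determinant tends to `0⁺` and `γ / D` to `+∞`.
-/

open Filter Topology

theorem eq_div_of_linear_system {K : Type*} [Field K] {p q r u v a c : K}
    (hD : p ^ 2 - q * r ≠ 0) (h₁ : p * a - q * c = u) (h₂ : -r * a + p * c = v) :
    a = (p * u + q * v) / (p ^ 2 - q * r) := by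
  rw [eq_div_iff hD]
  linear_combination p * h₁ + q * h₂

theorem Filter.Tendsto.const_div_atTop_of_tendsto_zero_of_pos {f : ℝ → ℝ} {x₀ c : ℝ}
    {s : Set ℝ} (hf : Tendsto f (𝓝[s] x₀) (𝓝 0)) (hpos : ∀ x ∈ s, 0 < f x) (hc : 0 < c) :
    Tendsto (fun x => c / f x) (𝓝[s] x₀) atTop := by
  have hf' : Tendsto f (𝓝[s] x₀) (𝓝[>] 0) :=
    tendsto_nhdsWithin_of_tendsto_nhds_of_eventually_within f hf
      (eventually_nhdsWithin_of_forall hpos)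
  simpa only [div_eq_mul_inv, Pi.inv_apply] using hf'.inv_tendsto_nhdsGT_zero.const_mul_atTop hc

section Determinant

variable {α β γ s t : ℝ}

theorem det_eq_mul_of_sq_eq (hs : s ^ 2 = β * γ) :
    (1 + t - t * α) ^ 2 - t ^ 2 * γ * β = (1 - t * (α + s - 1)) * (1 + t - t * α + t * s) := by
  linear_combination t ^ 2 * hs

theorem det_pos_of_mem_Ico (hs₀ : 0 ≤ s) (hs : s ^ 2 = β * γ) (hM : 0 < α + s - 1)
    (ht : t ∈ Set.Ico 0 (1 / (α + s - 1))) : 0 < (1 + t - t * α) ^ 2 - t ^ 2 * γ * β := by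
  obtain ⟨ht₀, htT⟩ := ht
  have h₁ : 0 < 1 - t * (α + s - 1) := by
    rw [lt_div_iff₀ hM] at htT
    linarith
  have h₂ : 0 < 1 + t - t * α + t * s := by nlinarith [mul_nonneg ht₀ hs₀]
  rw [det_eq_mul_of_sq_eq hs]
  positivity

theorem det_eq_zero_at_inv (hs : s ^ 2 = β * γ) (hM : α + s - 1 ≠ 0) :
    (1 + 1 / (α + s - 1) - 1 / (α + s - 1) * α) ^ 2 - (1 / (α + s - 1)) ^ 2 * γ * β = 0 := by
  rw [det_eq_mul_of_sq_eq hs, one_div_mul_cancel hM, sub_self, zero_mul]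

end Determinant

theorem second_moment_formula_general (α β γ : ℝ) (hβ : 0 ≤ β) :
    (∀ t : ℝ, 0 ≤ t → ((1 + t - t * α) ^ 2 - t ^ 2 * γ * β ≠ 0) →
      ∀ a c : ℝ,
        ((1 + t - t * α) * a - t * γ * c = γ / (1 + t) ∧
         -(t * β) * a + (1 + t - t * α) * c = α / (1 + t)) →
        a = γ / ((1 + t - t * α) ^ 2 - t ^ 2 * γ * β)) ∧
    (1 < α + Real.sqrt (β * γ) → 0 < γ →
      Tendsto (fun t : ℝ => γ / ((1 + t - t * α) ^ 2 - t ^ 2 * γ * β))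
        (nhdsWithin (1 / (α + Real.sqrt (β * γ) - 1))
          (Set.Ico 0 (1 / (α + Real.sqrt (β * γ) - 1)))) atTop) := by
  constructor
  · rintro t ht hD a c ⟨h₁, h₂⟩
    have hnum : (1 + t - t * α) * (γ / (1 + t)) + t * γ * (α / (1 + t)) = γ := by
      field_simp
      ring
    rw [eq_div_of_linear_system (by convert hD using 1; ring) h₁ h₂, hnum]
    congr 1; ring
  · intro hM hγ
    have hs : Real.sqrt (β * γ) ^ 2 = β * γ := Real.sq_sqrt (mul_nonneg hβ hγ.le)
    have hM₀ : 0 < α + Real.sqrt (β * γ) - 1 := by linarith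
    have hD : Tendsto (fun t : ℝ => (1 + t - t * α) ^ 2 - t ^ 2 * γ * β)
        (𝓝 (1 / (α + Real.sqrt (β * γ) - 1))) (𝓝 0) := by
      rw [← det_eq_zero_at_inv hs hM₀.ne']
      exact Continuous.tendsto (by fun_prop) _
    exact (hD.mono_left nhdsWithin_le_nhds).const_div_atTop_of_tendsto_zero_of_pos
      (fun t ht => det_pos_of_mem_Ico (Real.sqrt_nonneg _) hs hM₀ ht) hγ

/-- the solution of the linear system
[[1+t−tα, −tγ],[−tβ, 1+t−tα]]·(a,c)ᵀ = (γ,α)ᵀ/(1+t) has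
a = γ/((1+t−tα)² − t²γβ); and if M = α+√(βγ) > 1 and γ > 0 then
a(t) = γ/D(t) tends to +∞ as t → T_c = 1/(M−1) from within [0,T_c). -/
theorem second_moment_formula (α β γ : ℝ) (hα : 0 ≤ α) (hβ : 0 ≤ β) (hγ : 0 ≤ γ) :
    (∀ t : ℝ, 0 ≤ t → ((1 + t - t * α) ^ 2 - t ^ 2 * γ * β ≠ 0) →
      ∀ a c : ℝ,
        ((1 + t - t * α) * a - t * γ * c = γ / (1 + t) ∧
         -(t * β) * a + (1 + t - t * α) * c = α / (1 + t)) →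
        a = γ / ((1 + t - t * α) ^ 2 - t ^ 2 * γ * β)) ∧
    (1 < α + Real.sqrt (β * γ) → 0 < γ →
      Tendsto (fun t : ℝ => γ / ((1 + t - t * α) ^ 2 - t ^ 2 * γ * β))
        (nhdsWithin (1 / (α + Real.sqrt (β * γ) - 1))
          (Set.Ico 0 (1 / (α + Real.sqrt (β * γ) - 1)))) atTop) :=
  second_moment_formula_general α β γ hβ
end

section
/- Let ν be a probability measure on ℕ and let T be the total progeny of a Galton-Watson process with offspring distribution ν started from two independent ancestors. Then for m ≥ 2, P(T = m) = (2/m)·ν^{*m}(m−2). -/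
open MeasureTheory ProbabilityTheory

/-- Convolution of two sequences on ℕ. -/
def conv (f g : ℕ → ℝ) : ℕ → ℝ := fun n => ∑ k ∈ Finset.range (n + 1), f k * g (n - k)

/-- m-fold convolution power. -/
def convPow (f : ℕ → ℝ) : ℕ → ℕ → ℝ
  | 0 => fun n => if n = 0 then 1 else 0
  | m + 1 => conv f (convPow f m)

/-!
Let `F` be the generating function of `ν` and `a k = (1/k) [X^(k-1)] F^k`, so that
`P(T₁ = k) = a k` and `P(T₁ + T₂ = m) = ∑_{i+j=m} a i * a j`. The `a k` are the coefficients of the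
root `w` of `w = X F(w)`; substituting `X = Y / F(Y)` and multiplying by `F(Y)^N` turns this into
`Y F^N = ∑_{k ≤ N} a k Y^k F^(N-k) + O(Y^(N+1))`, which is proved directly by induction on `N`:
the inductive step pairs the remainder with `F - X F'`, using
`[X^n] (F - X F') F^j = (j + 1 - n)/(j + 1) [X^n] F^(j+1)`. The coefficient of `Y^(m-1)` in `F` times
the identity for `N = m - 1` is `∑_{i+j=m} a i * (j * a j) = [X^(m-2)] F^m`, and symmetrizing in
`i, j` gives `∑_{i+j=m} a i * a j = (2/m) [X^(m-2)] F^m`.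
-/

open Finset

theorem ProbabilityTheory.IndepFun.measure_add_eq_sum_antidiagonal {Ω : Type*}
    [MeasurableSpace Ω] {μ : Measure Ω} {X Y : Ω → ℕ} (hX : Measurable X) (hY : Measurable Y)
    (hXY : IndepFun X Y μ) (m : ℕ) :
    μ {ω | X ω + Y ω = m} = ∑ p ∈ antidiagonal m, μ {ω | X ω = p.1} * μ {ω | Y ω = p.2} := by
  have hfiber (p : ℕ × ℕ) : (fun ω ↦ (X ω, Y ω)) ⁻¹' {p} = X ⁻¹' {p.1} ∩ Y ⁻¹' {p.2} := by
    ext ω; simp [Prod.ext_iff]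
  have hevent : {ω | X ω + Y ω = m} = (fun ω ↦ (X ω, Y ω)) ⁻¹' ↑(antidiagonal m) := by
    ext ω; simp
  rw [hevent, ← sum_measure_preimage_singleton _ fun p _ ↦ hX.prodMk hY (measurableSet_singleton p)]
  refine sum_congr rfl fun p _ ↦ ?_
  rw [hfiber, hXY.measure_inter_preimage_eq_mul _ _ (measurableSet_singleton _)
    (measurableSet_singleton _)]
  rfl

namespace PowerSeries

theorem mk_conv (f g : ℕ → ℝ) : mk (conv f g) = mk f * mk g := by
  ext n
  simp [conv, coeff_mul, Nat.sum_antidiagonal_eq_sum_range_succ_mk]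

theorem mk_convPow (f : ℕ → ℝ) (m : ℕ) : mk (convPow f m) = mk f ^ m := by
  induction m with
  | zero => ext n; simp [convPow, coeff_one]
  | succ m ih => rw [convPow, mk_conv, ih, pow_succ']

theorem convPow_eq_coeff_pow (f : ℕ → ℝ) (m n : ℕ) : convPow f m n = coeff n (mk f ^ m) := by
  rw [← mk_convPow, coeff_mk]

theorem coeff_X_mul_derivative {R : Type*} [CommSemiring R] (f : R⟦X⟧) (n : ℕ) :
    coeff n (X * d⁄dX R f) = n * coeff n f := by
  cases n with
  | zero => simp
  | succ n => rw [coeff_succ_X_mul, coeff_derivative, mul_comm]; push_cast; rfl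

theorem coeff_sub_X_mul_derivative_mul_pow {R : Type*} [CommRing R] (F : R⟦X⟧) (j n : ℕ) :
    (j + 1 : R) * coeff n ((F - X * d⁄dX R F) * F ^ j) = (j + 1 - n) * coeff n (F ^ (j + 1)) := by
  have h : C (j + 1 : R) * ((F - X * d⁄dX R F) * F ^ j)
      = C (j + 1 : R) * F ^ (j + 1) - X * d⁄dX R (F ^ (j + 1)) := by
    rw [derivative_pow]
    simp only [map_add, map_natCast, map_one, Nat.cast_add, Nat.cast_one, add_tsub_cancel_right]
    ring
  have hcoeff := congrArg (coeff n) h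
  rw [coeff_C_mul, map_sub, coeff_C_mul, coeff_X_mul_derivative] at hcoeff
  rw [hcoeff]
  ring

section Lagrange

variable {K : Type*} [Field K] (F : K⟦X⟧)

/-- Vanishes at `k = 0` through `(0 : K)⁻¹ = 0`, as `P(T₁ = 0) = 0` requires. -/
noncomputable def lagrangeCoeff (k : ℕ) : K := (k : K)⁻¹ * coeff (k - 1) (F ^ k)

@[simp] theorem lagrangeCoeff_zero : lagrangeCoeff F 0 = 0 := by
  simp [lagrangeCoeff]

noncomputable def lagrangeRemainder (N : ℕ) : K⟦X⟧ :=
  X * F ^ N - ∑ p ∈ antidiagonal N, C (lagrangeCoeff F p.1) * X ^ p.1 * F ^ p.2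

theorem lagrangeRemainder_succ (N : ℕ) :
    lagrangeRemainder F (N + 1)
      = F * lagrangeRemainder F N - C (lagrangeCoeff F (N + 1)) * X ^ (N + 1) := by
  simp only [lagrangeRemainder, Nat.sum_antidiagonal_succ', mul_sub, mul_sum, pow_zero, mul_one]
  ring_nf

variable [CharZero K]

theorem coeff_pow_succ_eq_mul_lagrangeCoeff (n : ℕ) :
    coeff n (F ^ (n + 1)) = (n + 1) * lagrangeCoeff F (n + 1) := by
  rw [lagrangeCoeff, Nat.add_sub_cancel, ← mul_assoc]
  push_cast
  rw [mul_inv_cancel₀ (Nat.cast_add_one_ne_zero n), one_mul]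

theorem coeff_sub_X_mul_derivative_mul_pow_self (n : ℕ) :
    coeff n ((F - X * d⁄dX K F) * F ^ n) = lagrangeCoeff F (n + 1) := by
  have h := coeff_sub_X_mul_derivative_mul_pow F n n
  rw [add_sub_cancel_left, one_mul, coeff_pow_succ_eq_mul_lagrangeCoeff] at h
  exact mul_left_cancel₀ (Nat.cast_add_one_ne_zero n) h

theorem coeff_succ_sub_X_mul_derivative_mul_pow (j : ℕ) :
    coeff (j + 1) ((F - X * d⁄dX K F) * F ^ j) = 0 := by
  have h := coeff_sub_X_mul_derivative_mul_pow F j (j + 1)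
  push_cast at h
  rw [sub_self, zero_mul] at h
  exact (mul_eq_zero.mp h).resolve_left (Nat.cast_add_one_ne_zero j)

theorem coeff_succ_sub_X_mul_derivative_mul_lagrangeRemainder (N : ℕ) :
    coeff (N + 1) ((F - X * d⁄dX K F) * lagrangeRemainder F N) = lagrangeCoeff F (N + 1) := by
  have hterm : ∀ p ∈ antidiagonal N,
      coeff (N + 1) ((F - X * d⁄dX K F) * (C (lagrangeCoeff F p.1) * X ^ p.1 * F ^ p.2)) = 0 := by
    rintro ⟨k, l⟩ hkl
    rw [HasAntidiagonal.mem_antidiagonal] at hkl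
    rw [← hkl, show (F - X * d⁄dX K F) * (C (lagrangeCoeff F k) * X ^ k * F ^ l)
        = C (lagrangeCoeff F k) * (X ^ k * ((F - X * d⁄dX K F) * F ^ l)) by ring,
      coeff_C_mul, show k + l + 1 = (l + 1) + k by ring, coeff_X_pow_mul,
      coeff_succ_sub_X_mul_derivative_mul_pow, mul_zero]
  rw [lagrangeRemainder, mul_sub, map_sub, mul_sum, map_sum, sum_eq_zero hterm, sub_zero,
    mul_left_comm, coeff_succ_X_mul, coeff_sub_X_mul_derivative_mul_pow_self]

theorem X_pow_succ_dvd_lagrangeRemainder (N : ℕ) : X ^ (N + 1) ∣ lagrangeRemainder F N := by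
  induction N with
  | zero => simp [lagrangeRemainder]
  | succ N ih =>
    obtain ⟨Q, hQ⟩ := ih
    have hconst : constantCoeff F * constantCoeff Q = lagrangeCoeff F (N + 1) := by
      rw [← coeff_succ_sub_X_mul_derivative_mul_lagrangeRemainder, hQ, mul_left_comm,
        coeff_X_pow_mul', if_pos le_rfl, Nat.sub_self, coeff_zero_eq_constantCoeff_apply,
        map_mul, map_sub, map_mul, constantCoeff_X, zero_mul, sub_zero]
    rw [lagrangeRemainder_succ, hQ, pow_succ _ (N + 1),
      show F * (X ^ (N + 1) * Q) - C (lagrangeCoeff F (N + 1)) * X ^ (N + 1)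
        = X ^ (N + 1) * (F * Q - C (lagrangeCoeff F (N + 1))) by ring]
    exact mul_dvd_mul_left _ (X_dvd_iff.mpr (by simp [hconst]))

theorem sum_antidiagonal_lagrangeCoeff_mul_natCast_mul (n : ℕ) :
    ∑ p ∈ antidiagonal (n + 2), lagrangeCoeff F p.1 * (p.2 * lagrangeCoeff F p.2)
      = coeff n (F ^ (n + 2)) := by
  have hvanish : coeff (n + 1) (F * lagrangeRemainder F (n + 1)) = 0 :=
    X_pow_dvd_iff.mp (dvd_mul_of_dvd_right (X_pow_succ_dvd_lagrangeRemainder F (n + 1)) F) _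
      (by omega)
  have hterm : ∀ p ∈ antidiagonal (n + 1),
      coeff (n + 1) (F * (C (lagrangeCoeff F p.1) * X ^ p.1 * F ^ p.2))
        = lagrangeCoeff F p.1 * ((p.2 + 1 : ℕ) * lagrangeCoeff F (p.2 + 1)) := by
    rintro ⟨k, l⟩ hkl
    rw [HasAntidiagonal.mem_antidiagonal] at hkl
    rw [← hkl, show F * (C (lagrangeCoeff F k) * X ^ k * F ^ l)
        = C (lagrangeCoeff F k) * (X ^ k * F ^ (l + 1)) by ring,
      coeff_C_mul, add_comm k l, coeff_X_pow_mul, coeff_pow_succ_eq_mul_lagrangeCoeff]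
    push_cast; rfl
  rw [lagrangeRemainder, mul_sub, map_sub, mul_sum, map_sum, sum_congr rfl hterm,
    mul_left_comm, coeff_succ_X_mul, ← pow_succ', sub_eq_zero] at hvanish
  rw [Nat.sum_antidiagonal_succ', hvanish]
  simp

theorem sum_antidiagonal_lagrangeCoeff_mul (n : ℕ) :
    ∑ p ∈ antidiagonal (n + 2), lagrangeCoeff F p.1 * lagrangeCoeff F p.2
      = 2 / (n + 2) * coeff n (F ^ (n + 2)) := by
  have hswap : ∑ p ∈ antidiagonal (n + 2), lagrangeCoeff F p.2 * (p.1 * lagrangeCoeff F p.1)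
      = ∑ p ∈ antidiagonal (n + 2), lagrangeCoeff F p.1 * (p.2 * lagrangeCoeff F p.2) :=
    Nat.sum_antidiagonal_swap (f := fun p ↦ lagrangeCoeff F p.1 * (p.2 * lagrangeCoeff F p.2))
  have hsplit : (n + 2 : K) * ∑ p ∈ antidiagonal (n + 2), lagrangeCoeff F p.1 * lagrangeCoeff F p.2
      = ∑ p ∈ antidiagonal (n + 2), lagrangeCoeff F p.1 * (p.2 * lagrangeCoeff F p.2)
        + ∑ p ∈ antidiagonal (n + 2), lagrangeCoeff F p.2 * (p.1 * lagrangeCoeff F p.1) := by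
    rw [mul_sum, ← sum_add_distrib]
    refine sum_congr rfl fun p hp ↦ ?_
    rw [← Nat.cast_ofNat, ← Nat.cast_add, ← mem_antidiagonal.mp hp]
    push_cast; ring
  rw [hswap, sum_antidiagonal_lagrangeCoeff_mul_natCast_mul] at hsplit
  have hn : (n + 2 : K) ≠ 0 := by exact_mod_cast Nat.succ_ne_zero (n + 1)
  rw [div_mul_eq_mul_div, eq_div_iff hn, mul_comm, hsplit, two_mul]

end Lagrange

end PowerSeries

theorem two_ancestor_progeny_general {Ω : Type*} [MeasurableSpace Ω] (μ : Measure Ω)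
    [IsProbabilityMeasure μ] (ν : ℕ → ℝ)
    (T₁ T₂ : Ω → ℕ) (hm₁ : Measurable T₁) (hm₂ : Measurable T₂)
    (hindep : IndepFun T₁ T₂ μ)
    (hlaw₁ : ∀ n : ℕ, 1 ≤ n → (μ {ω | T₁ ω = n}).toReal = (1 / (n : ℝ)) * convPow ν n (n - 1))
    (hlaw₂ : ∀ n : ℕ, 1 ≤ n → (μ {ω | T₂ ω = n}).toReal = (1 / (n : ℝ)) * convPow ν n (n - 1))
    (h0₁ : μ {ω | T₁ ω = 0} = 0) (h0₂ : μ {ω | T₂ ω = 0} = 0) :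
    ∀ m : ℕ, 2 ≤ m →
      (μ {ω | T₁ ω + T₂ ω = m}).toReal = (2 / (m : ℝ)) * convPow ν m (m - 2) := by
  have hlaw (T : Ω → ℕ) (h0 : μ {ω | T ω = 0} = 0)
      (hpos : ∀ n : ℕ, 1 ≤ n → (μ {ω | T ω = n}).toReal = (1 / (n : ℝ)) * convPow ν n (n - 1))
      (n : ℕ) : (μ {ω | T ω = n}).toReal = PowerSeries.lagrangeCoeff (PowerSeries.mk ν) n := by
    rcases n with _ | n
    · simp [h0]
    · rw [hpos _ n.succ_pos, PowerSeries.convPow_eq_coeff_pow, PowerSeries.lagrangeCoeff, one_div]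
  intro m hm
  obtain ⟨n, rfl⟩ := Nat.exists_eq_add_of_le' hm
  rw [hindep.measure_add_eq_sum_antidiagonal hm₁ hm₂,
    ENNReal.toReal_sum fun _ _ ↦ ENNReal.mul_ne_top (measure_ne_top _ _) (measure_ne_top _ _)]
  simp only [ENNReal.toReal_mul, hlaw T₁ h0₁ hlaw₁, hlaw T₂ h0₂ hlaw₂]
  rw [PowerSeries.sum_antidiagonal_lagrangeCoeff_mul, PowerSeries.convPow_eq_coeff_pow,
    Nat.add_sub_cancel, Nat.cast_add, Nat.cast_ofNat]

/-- if T = T₁ + T₂ with T₁, T₂ independent copies of the total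
progeny of a Galton-Watson process with offspring law ν (whose law is given by
the Dwass/Otter formula P(T₁ = n) = (1/n)ν^{*n}(n−1) for n ≥ 1), then for
m ≥ 2, P(T = m) = (2/m)·ν^{*m}(m−2). -/
theorem two_ancestor_progeny {Ω : Type*} [MeasurableSpace Ω] (μ : Measure Ω)
    [IsProbabilityMeasure μ] (ν : ℕ → ℝ) (hν : ∀ n, 0 ≤ ν n) (hν1 : ∑' n : ℕ, ν n = 1)
    (T₁ T₂ : Ω → ℕ) (hm₁ : Measurable T₁) (hm₂ : Measurable T₂)
    (hindep : IndepFun T₁ T₂ μ)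
    (hlaw₁ : ∀ n : ℕ, 1 ≤ n → (μ {ω | T₁ ω = n}).toReal = (1 / (n : ℝ)) * convPow ν n (n - 1))
    (hlaw₂ : ∀ n : ℕ, 1 ≤ n → (μ {ω | T₂ ω = n}).toReal = (1 / (n : ℝ)) * convPow ν n (n - 1))
    (h0₁ : μ {ω | T₁ ω = 0} = 0) (h0₂ : μ {ω | T₂ ω = 0} = 0) :
    ∀ m : ℕ, 2 ≤ m →
      (μ {ω | T₁ ω + T₂ ω = m}).toReal = (2 / (m : ℝ)) * convPow ν m (m - 2) :=
  two_ancestor_progeny_general μ ν T₁ T₂ hm₁ hm₂ hindep hlaw₁ hlaw₂ h0₁ h0₂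
end
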